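/- arXiv:math/0505594 — 3 statements merged into one kernel-verified Lean document; each statement's English description precedes it below -/
import Mathlib

section
/- Let F be a field, let l ≥ 1, and for each j = 1, …, l let A_j and B_j be p × q_j matrices with entries in F and let w_j be a positive integer. Let C be the p × q matrix (q = q_1 + ⋯ + q_l) over the Laurent polynomial ring F[t,t⁻¹] whose j-th block of columns equals A_j·t^{w_j} + B_j, and let H be the cokernel of the F[t,t⁻¹]-linear map F[t,t⁻¹]^q → F[t,t⁻¹]^p given by the matrix C. Then the torsion submodule of H is a finite-dimensional F-vector space of dimension at most q_1·w_1 + ⋯ + q_l·w_l. -/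
/-!
Write `R = F[T;T⁻¹]`, `K` for its fraction field and `N ⊆ R^κ` for the span of vectors `v d`
whose entries have exponents in `[0, w d]`. Pick `r` of the `v d` forming a basis of the
`K`-span `V` of `N`, and `r` coordinates `J` on which `V` restricts injectively. Lift `m`
`F`-independent torsion classes to vectors `xⱼ`, shifted by a power of `T` so that all their
exponents lie in `[0, n)`. The vectors `T^k v d` (`v d` in the basis, `0 ≤ k < n - w d`) and the
`xⱼ` are `F`-independent, have exponents in `[0, n)` and lie in `V`, and on such vectors the
`r n` coefficients of exponents `0, …, n - 1` at the coordinates `J` are injective.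
Hence `∑ (n - w d) + m ≤ r n`, that is `m ≤ ∑ w d`.
-/

open LaurentPolynomial Module Submodule Set AddMonoidAlgebra

theorem Submodule.exists_finset_card_eq_finrank_eq_zero_of_eqOn_zero {K κ : Type*} [Field K]
    [Fintype κ] (V : Submodule K (κ → K)) :
    ∃ J : Finset κ, J.card = finrank K V ∧ ∀ z ∈ V, EqOn z 0 J → z = 0 := by
  let coord : κ → Dual K V := fun i => LinearMap.proj i ∘ₗ V.subtype
  obtain ⟨ι, a, ha, hspan, hli⟩ := exists_linearIndependent' K coord
  have : Fintype ι := Fintype.ofInjective a ha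
  have hcoann : (span K (range coord)).dualCoannihilator = ⊥ := by
    refine eq_bot_iff.2 fun z hz => ?_
    rw [mem_dualCoannihilator] at hz
    exact (mem_bot K).2 (Subtype.ext (funext fun i => hz _ (subset_span ⟨i, rfl⟩)))
  have htop : span K (range (coord ∘ a)) = ⊤ := by
    rw [hspan, ← Subspace.dualCoannihilator_dualAnnihilator_eq (W := span K (range coord)),
      hcoann, dualAnnihilator_bot]
  refine ⟨Finset.univ.map ⟨a, ha⟩, ?_, fun z hz hzJ => ?_⟩
  · rw [Finset.card_map, Finset.card_univ, ← finrank_span_eq_card hli, htop, finrank_top,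
      Subspace.dual_finrank_eq]
  · have hker : ⊤ ≤ LinearMap.ker (Dual.eval K V ⟨z, hz⟩) :=
      htop ▸ span_le.2 (range_subset_iff.2 fun c => hzJ (by simp))
    simpa using (forall_dual_apply_eq_zero_iff K (⟨z, hz⟩ : V)).1 fun φ => hker mem_top

theorem compLeft_algebraMap_mem_span_of_smul_mem {R K κ ι : Type*} [CommRing R] [IsDomain R]
    [Field K] [Algebra R K] [IsFractionRing R K] (v : ι → κ → R) {z : κ → R} {g : R}
    (hg : g ≠ 0) (hz : g • z ∈ span R (range v)) :
    (Algebra.linearMap R K).compLeft κ z ∈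
      span K (range ((Algebra.linearMap R K).compLeft κ ∘ v)) := by
  set toFrac := (Algebra.linearMap R K).compLeft κ
  have hspan : span R (range v) ≤ ((span K (range (toFrac ∘ v))).restrictScalars R).comap toFrac :=
    span_le.2 <| range_subset_iff.2 fun d => subset_span ⟨d, rfl⟩
  have hgz := hspan hz
  rw [mem_comap, map_smul, ← algebraMap_smul K g, restrictScalars_mem] at hgz
  exact (smul_mem_iff _ ((IsFractionRing.injective R K).ne hg |>.trans_eq (map_zero _))).1 hgz

theorem LinearIndependent.quotient_mk_smul_of_isUnit {F R M ι : Type*} [Field F] [CommRing R]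
    [Algebra F R] [AddCommGroup M] [Module R M] [Module F M] [IsScalarTower F R M]
    {N : Submodule R M} {x : ι → M} (hx : LinearIndependent F (N.mkQ ∘ x)) {u : R}
    (hu : IsUnit u) :
    LinearIndependent F (Submodule.Quotient.mk (p := N.restrictScalars F) ∘ fun j => u • x j) := by
  let φ := (Quotient.restrictScalarsEquiv F N).symm.toLinearMap ∘ₗ
    (LinearMap.lsmul R (M ⧸ N) u).restrictScalars F
  have hφ : Function.Injective φ := fun y y' h => hu.smul_left_cancel.1 <|
    (Quotient.restrictScalarsEquiv F N).symm.injective (by simpa [φ] using h)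
  have heq : φ ∘ N.mkQ ∘ x = Submodule.Quotient.mk ∘ fun j => u • x j := funext fun j => rfl
  exact heq ▸ hx.map' φ (LinearMap.ker_eq_bot.2 hφ)

theorem Nat.le_sum_of_sum_sub_add_le {ι : Type*} [Fintype ι] {f : ι → ℕ} {n m : ℕ}
    (hf : ∀ i, f i ≤ n) (h : ∑ i, (n - f i) + m ≤ Fintype.card ι * n) : m ≤ ∑ i, f i := by
  have : ∑ i, (n - f i) + ∑ i, f i = Fintype.card ι * n := by
    rw [← Finset.sum_add_distrib, Finset.sum_congr rfl fun i _ => Nat.sub_add_cancel (hf i)]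
    simp
  omega

namespace LaurentPolynomial

variable {F : Type*} [Field F]

theorem T_mul_mem_supported {f : F[T;T⁻¹]} {s t : Set ℤ} {k : ℤ} (hf : f ∈ supported F F s)
    (hst : MapsTo (k + ·) s t) : T k * f ∈ supported F F t := by
  rw [mem_supported'] at hf ⊢
  intro m hm
  rw [T, coeff_single_mul_apply, hf _ fun h => hm (by simpa using hst h), mul_zero]

theorem exists_forall_mem_supported_Ico_neg {ι : Type*} [Finite ι] (f : ι → F[T;T⁻¹]) :
    ∃ M : ℕ, ∀ i, f i ∈ supported F F (Ico (-M : ℤ) M) := by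
  have (i : ι) : ∀ᶠ M : ℕ in Filter.atTop, f i ∈ supported F F (Ico (-M : ℤ) M) := by
    refine Filter.eventually_atTop.2
      ⟨(f i).coeff.support.sup Int.natAbs + 1, fun M hM => mem_supported.2 fun k hk => ?_⟩
    have := Finset.le_sup (f := Int.natAbs) hk
    simp only [mem_Ico]
    omega
  exact (Filter.eventually_all.2 this).exists

theorem C_mul_T_mem_supported (a : F) (n : ℤ) : C a * T n ∈ supported F F {n} :=
  mem_supported.2 <| by exact_mod_cast support_C_mul_T a n

theorem algebraMap_mul_T_add_algebraMap_mem_supported (a b : F) (w : ℕ) :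
    algebraMap F F[T;T⁻¹] a * T w + algebraMap F F[T;T⁻¹] b ∈ supported F F (Icc 0 (w : ℤ)) := by
  rw [← C_eq_algebraMap, ← C_eq_algebraMap, ← mul_one (C b), ← T_zero]
  exact add_mem (supported_mono (by simp) (C_mul_T_mem_supported a w))
    (supported_mono (by simp) (C_mul_T_mem_supported b 0))

theorem linearIndependent_T_natCast : LinearIndependent F fun k : ℕ => (T k : F[T;T⁻¹]) :=
  (AddMonoidAlgebra.basis ℤ F).linearIndependent.comp _ Nat.cast_injective

theorem linearIndependent_T_smul {M ι : Type*} [AddCommGroup M] [Module F[T;T⁻¹] M] [Module F M]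
    [IsScalarTower F F[T;T⁻¹] M] {u : ι → M} (hu : LinearIndependent F[T;T⁻¹] u) (ℓ : ι → ℕ) :
    LinearIndependent F fun p : Σ c, Fin (ℓ c) => (T (p.2 : ℕ) : F[T;T⁻¹]) • u p.1 := by
  refine (linearIndependent_smul (R := F) linearIndependent_T_natCast hu).comp
    (fun p : Σ c, Fin (ℓ c) => ((p.2 : ℕ), p.1)) ?_
  rintro ⟨c, k⟩ ⟨c', k'⟩ h
  obtain ⟨hk, rfl⟩ := Prod.mk.inj h
  exact congrArg (Sigma.mk c) (Fin.ext hk)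

end LaurentPolynomial

section

variable {F : Type*} [Field F]

theorem card_le_finrank_mul_card_of_mem_supported {κ ι : Type*} [Fintype κ] [Fintype ι]
    (V : Submodule (FractionRing F[T;T⁻¹]) (κ → FractionRing F[T;T⁻¹])) (s : Finset ℤ)
    (b : ι → κ → F[T;T⁻¹]) (hb : LinearIndependent F b)
    (hs : ∀ j i, b j i ∈ supported F F (s : Set ℤ))
    (hV : ∀ j, (Algebra.linearMap F[T;T⁻¹] (FractionRing F[T;T⁻¹])).compLeft κ (b j) ∈ V) :
    Fintype.card ι ≤ finrank (FractionRing F[T;T⁻¹]) V * s.card := by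
  classical
  set toFrac := (Algebra.linearMap F[T;T⁻¹] (FractionRing F[T;T⁻¹])).compLeft κ
  obtain ⟨J, hJ, hJV⟩ := V.exists_finset_card_eq_finrank_eq_zero_of_eqOn_zero
  let coeffs : (κ → F[T;T⁻¹]) →ₗ[F] J → s → F := LinearMap.pi fun i => LinearMap.pi fun k =>
    Finsupp.lapply (k : ℤ) ∘ₗ (coeffLinearEquiv F).toLinearMap ∘ₗ LinearMap.proj (i : κ)
  let P : Submodule F (κ → F[T;T⁻¹]) := Submodule.pi univ (fun _ => supported F F s) ⊓
    ((V.restrictScalars F[T;T⁻¹]).comap toFrac).restrictScalars F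
  have hbP : span F (range b) ≤ P :=
    span_le.2 <| range_subset_iff.2 fun j => ⟨fun i _ => hs j i, hV j⟩
  have hdisj : Disjoint (span F (range b)) (LinearMap.ker coeffs) := by
    refine disjoint_def.2 fun z hz hker => ?_
    obtain ⟨hzs, hzV⟩ := hbP hz
    have hzJ : EqOn z 0 J := fun i hi => by
      ext k
      by_cases hk : k ∈ s
      · exact congr_fun (congr_fun (LinearMap.mem_ker.1 hker) ⟨i, hi⟩) ⟨k, hk⟩
      · exact mem_supported'.1 (hzs i trivial) k hk
    have : toFrac z = 0 := hJV _ hzV fun i hi => by simp [toFrac, hzJ hi]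
    exact funext fun i => IsFractionRing.injective _ (FractionRing F[T;T⁻¹])
      (by simpa [toFrac] using congr_fun this i)
  simpa [hJ, Module.finrank_pi_fintype, Module.finrank_pi] using
    (hb.map hdisj).fintype_card_le_finrank

theorem card_le_sum_of_linearIndependent_mkQ {κ ι ι₂ : Type*} [Fintype κ] [Fintype ι]
    [Fintype ι₂] (v : ι → κ → F[T;T⁻¹]) (w : ι → ℕ)
    (hv : ∀ d i, v d i ∈ supported F F (Icc 0 (w d : ℤ))) (x : ι₂ → κ → F[T;T⁻¹])
    (hx : ∀ j, ∃ g : F[T;T⁻¹], g ≠ 0 ∧ g • x j ∈ span F[T;T⁻¹] (range v))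
    (hxN : LinearIndependent F ((span F[T;T⁻¹] (range v)).mkQ ∘ x)) :
    Fintype.card ι₂ ≤ ∑ d, w d := by
  classical
  set K := FractionRing F[T;T⁻¹]
  set N := span F[T;T⁻¹] (range v)
  set toFrac := (Algebra.linearMap F[T;T⁻¹] K).compLeft κ
  obtain ⟨ι', a, ha, hspan, hli⟩ := exists_linearIndependent' K (toFrac ∘ v)
  have : Fintype ι' := Fintype.ofInjective a ha
  obtain ⟨M, hM⟩ := exists_forall_mem_supported_Ico_neg fun p : ι₂ × κ => x p.1 p.2
  set n := 2 * M + ∑ d, w d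
  let cols (p : Σ c : ι', Fin (n - w (a c))) := (T (p.2 : ℕ) : F[T;T⁻¹]) • v (a p.1)
  let shifted (j : ι₂) := (T M : F[T;T⁻¹]) • x j
  have hcols_mem (p) : cols p ∈ N.restrictScalars F :=
    smul_mem _ _ (subset_span (mem_range_self (a p.1)))
  have hindep : LinearIndependent F (Sum.elim cols shifted) :=
    .sumElim_of_quotient (f := fun p => (⟨cols p, hcols_mem p⟩ : N.restrictScalars F))
      (.of_comp (N.restrictScalars F).subtype
        (linearIndependent_T_smul ((hli.restrict_scalars' F[T;T⁻¹]).of_comp toFrac) _))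
      shifted (hxN.quotient_mk_smul_of_isUnit (isUnit_T _))
  have hsupp : ∀ b i, Sum.elim cols shifted b i ∈ supported F F ↑(Finset.Ico (0 : ℤ) n) := by
    rintro (⟨c, k⟩ | j) i
    · refine T_mul_mem_supported (hv _ i) fun m hm => ?_
      simp only [mem_Icc, Finset.coe_Ico, mem_Ico] at hm ⊢
      omega
    · refine T_mul_mem_supported (hM (j, i)) fun m hm => ?_
      simp only [Finset.coe_Ico, mem_Ico] at hm ⊢
      omega
  have hV : ∀ b, toFrac (Sum.elim cols shifted b) ∈ span K (range (toFrac ∘ v)) := by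
    rintro (⟨c, k⟩ | j) <;> simp only [Sum.elim_inl, Sum.elim_inr, cols, shifted, map_smul]
    · exact smul_of_tower_mem _ _ (subset_span ⟨a c, rfl⟩)
    · obtain ⟨g, hg, hgx⟩ := hx j
      exact smul_of_tower_mem _ _ (compLeft_algebraMap_mem_span_of_smul_mem v hg hgx)
  have hcount := card_le_finrank_mul_card_of_mem_supported _ _ _ hindep hsupp hV
  rw [← hspan, finrank_span_eq_card hli, Int.card_Ico, Fintype.card_sum,
    Fintype.card_sigma] at hcount
  simp only [Fintype.card_fin, sub_zero, Int.toNat_natCast] at hcount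
  have hw (c : ι') : w (a c) ≤ n :=
    (Finset.single_le_sum (by simp) (Finset.mem_univ (a c))).trans (Nat.le_add_left _ _)
  calc Fintype.card ι₂ ≤ ∑ c, w (a c) := Nat.le_sum_of_sum_sub_add_le hw hcount
    _ = ∑ d ∈ Finset.univ.map ⟨a, ha⟩, w d := (Finset.sum_map Finset.univ ⟨a, ha⟩ w).symm
    _ ≤ ∑ d, w d := Finset.sum_le_sum_of_subset (Finset.subset_univ _)

theorem finiteDimensional_torsion_and_finrank_le {κ ι : Type*} [Fintype κ] [Fintype ι]
    (v : ι → κ → F[T;T⁻¹]) (w : ι → ℕ) (hv : ∀ d i, v d i ∈ supported F F (Icc 0 (w d : ℤ))) :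
    FiniteDimensional F
      ((torsion F[T;T⁻¹] ((κ → F[T;T⁻¹]) ⧸ span F[T;T⁻¹] (range v))).restrictScalars F) ∧
    finrank F
      ((torsion F[T;T⁻¹] ((κ → F[T;T⁻¹]) ⧸ span F[T;T⁻¹] (range v))).restrictScalars F) ≤
      ∑ d, w d := by
  set N := span F[T;T⁻¹] (range v)
  set Tor := (torsion F[T;T⁻¹] ((κ → F[T;T⁻¹]) ⧸ N)).restrictScalars F
  have hrank : Module.rank F Tor ≤ (∑ d, w d : ℕ) := rank_le fun s hs => by
    choose x hx using fun y : s => N.mkQ_surjective (y : Tor)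
    have htors (y : s) : ∃ g : F[T;T⁻¹], g ≠ 0 ∧ g • x y ∈ N := by
      obtain ⟨g, hg⟩ := (mem_torsion_iff _).1 (y : Tor).2
      refine ⟨g, nonZeroDivisors.coe_ne_zero g, (Quotient.mk_eq_zero N).1 ?_⟩
      rwa [Quotient.mk_smul, ← mkQ_apply, hx y]
    have hindep : LinearIndependent F (N.mkQ ∘ x) := by
      rw [show N.mkQ ∘ x = Tor.subtype ∘ fun y : s => (y : Tor) from funext hx]
      exact hs.map' Tor.subtype Tor.ker_subtype
    simpa using card_le_sum_of_linearIndependent_mkQ v w hv x htors hindep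
  have : Module.Finite F Tor :=
    Module.rank_lt_aleph0_iff.1 (hrank.trans_lt Cardinal.natCast_lt_aleph0)
  exact ⟨this, finrank_le_of_rank_le hrank⟩

end

theorem torsion_of_coker_block_matrix_finite_dimensional_general
    {F : Type*} [Field F] (l p : ℕ) (q : Fin l → ℕ) (w : Fin l → ℕ)
    (A B : (j : Fin l) → Matrix (Fin p) (Fin (q j)) F)
    (C : Matrix (Fin p) ((j : Fin l) × Fin (q j)) (LaurentPolynomial F))
    (hC : ∀ (r : Fin p) (j : Fin l) (s : Fin (q j)),
      C r ⟨j, s⟩ = (algebraMap F (LaurentPolynomial F) (A j r s)) * T (w j)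
          + algebraMap F (LaurentPolynomial F) (B j r s)) :
    FiniteDimensional F
      ((Submodule.torsion (LaurentPolynomial F)
        ((Fin p → LaurentPolynomial F) ⧸ LinearMap.range C.mulVecLin)).restrictScalars F)
    ∧ Module.finrank F
        ((Submodule.torsion (LaurentPolynomial F)
          ((Fin p → LaurentPolynomial F) ⧸ LinearMap.range C.mulVecLin)).restrictScalars F)
        ≤ ∑ j, q j * w j := by
  have hcol (d : (j : Fin l) × Fin (q j)) (r : Fin p) :
      C.col d r ∈ supported F F (Icc 0 (w d.1 : ℤ)) := by
    rw [Matrix.col_apply, hC r d.1 d.2]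
    exact algebraMap_mul_T_add_algebraMap_mem_supported _ _ _
  have hsum : ∑ d : (j : Fin l) × Fin (q j), w d.1 = ∑ j, q j * w j := by
    simp [← Finset.univ_sigma_univ, Finset.sum_sigma]
  rw [Matrix.range_mulVecLin, ← hsum]
  exact finiteDimensional_torsion_and_finrank_le C.col (fun d => w d.1) hcol

theorem torsion_of_coker_block_matrix_finite_dimensional
    {F : Type*} [Field F] (l p : ℕ) (hl : 1 ≤ l) (q : Fin l → ℕ) (w : Fin l → ℕ)
    (hw : ∀ j, 0 < w j)
    (A B : (j : Fin l) → Matrix (Fin p) (Fin (q j)) F)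
    (C : Matrix (Fin p) ((j : Fin l) × Fin (q j)) (LaurentPolynomial F))
    (hC : ∀ (r : Fin p) (j : Fin l) (s : Fin (q j)),
      C r ⟨j, s⟩ = (algebraMap F (LaurentPolynomial F) (A j r s)) * T (w j)
          + algebraMap F (LaurentPolynomial F) (B j r s)) :
    FiniteDimensional F
      ((Submodule.torsion (LaurentPolynomial F)
        ((Fin p → LaurentPolynomial F) ⧸ LinearMap.range C.mulVecLin)).restrictScalars F)
    ∧ Module.finrank F
        ((Submodule.torsion (LaurentPolynomial F)
          ((Fin p → LaurentPolynomial F) ⧸ LinearMap.range C.mulVecLin)).restrictScalars F)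
        ≤ ∑ j, q j * w j :=
  torsion_of_coker_block_matrix_finite_dimensional_general l p q w A B C hC
end

section
/- Let F be a field, let A and B be invertible n × n matrices over F, let w_1, …, w_n be positive integers, and let D be the diagonal n × n matrix over the polynomial ring F[t] with diagonal entries t^{w_1}, …, t^{w_n}. Then the polynomial det(A·D + B) ∈ F[t] has constant coefficient equal to det(B), coefficient of t^{w_1 + ⋯ + w_n} equal to det(A), and degree exactly w_1 + ⋯ + w_n. -/
/-!
Expanding `det (A D + B)` column by column gives
`∑ s, det(columns of A on s, of B off s) · t ^ (∑ i ∈ s, w i)`. Since all weights are positive,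
the exponent `∑ i ∈ s, w i` is `0` only for `s = ∅` and reaches `∑ i, w i` only for `s = univ`,
so the coefficients there are `det B` and `det A`, and every other term has smaller degree.
-/

open Polynomial Finset

namespace Matrix

variable {m n R : Type*} [DecidableEq n]

def piecewiseCols (s : Finset n) (M N : Matrix m n R) : Matrix m n R :=
  of fun i j => if j ∈ s then M i j else N i j

@[simp]
theorem piecewiseCols_empty (M N : Matrix m n R) : piecewiseCols ∅ M N = N := by
  ext; simp [piecewiseCols]

@[simp]
theorem piecewiseCols_univ [Fintype n] (M N : Matrix m n R) : piecewiseCols univ M N = M := by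
  ext; simp [piecewiseCols]

theorem piecewiseCols_map {S : Type*} (s : Finset n) (M N : Matrix m n R) (f : R → S) :
    (piecewiseCols s M N).map f = piecewiseCols s (M.map f) (N.map f) := by
  ext i j; by_cases hj : j ∈ s <;> simp [piecewiseCols, hj]

theorem det_mul_diagonal_add [Fintype n] [CommRing R] (M N : Matrix n n R) (d : n → R) :
    (M * diagonal d + N).det = ∑ s : Finset n, (∏ j ∈ s, d j) * (piecewiseCols s M N).det := by
  have h_rows : (M * diagonal d + N)ᵀ = of ((fun j => d j • Mᵀ j) + fun j => Nᵀ j) := by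
    ext j i; simp [mul_comm]
  rw [← det_transpose, h_rows]
  refine (detRowAlternating.toMultilinearMap.map_add_univ _ _).trans (sum_congr rfl fun s _ => ?_)
  let P : n → n → R := fun j i => piecewiseCols s M N i j
  have h_piecewise : s.piecewise (fun j => d j • Mᵀ j) (fun j => Nᵀ j)
      = s.piecewise (fun j => d j • P j) P := by
    ext j i; by_cases hj : j ∈ s <;> simp [P, piecewiseCols, hj]
  rw [h_piecewise, MultilinearMap.map_piecewise_smul, smul_eq_mul]
  exact congrArg _ (det_transpose _)

end Matrix

namespace Polynomial

variable {R ι : Type*} [Semiring R]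

theorem coeff_sum_C_mul_X_pow_of_ne (S : Finset ι) (c : ι → R) (e : ι → ℕ) {i : ι}
    (hi : i ∈ S) (he : ∀ j ∈ S, j ≠ i → e j ≠ e i) :
    (∑ j ∈ S, C (c j) * X ^ e j).coeff (e i) = c i := by
  rw [finsetSum_coeff, sum_eq_single_of_mem i hi fun j hj hji => ?_]
  · simp
  · simp [(he j hj hji).symm]

theorem degree_sum_C_mul_X_pow_le (S : Finset ι) (c : ι → R) (e : ι → ℕ) {d : ℕ}
    (he : ∀ j ∈ S, e j ≤ d) : (∑ j ∈ S, C (c j) * X ^ e j).degree ≤ (d : WithBot ℕ) :=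
  (degree_sum_le _ _).trans <| Finset.sup_le fun j hj =>
    (degree_C_mul_X_pow_le _ _).trans (WithBot.coe_le_coe.mpr (he j hj))

end Polynomial

theorem Finset.sum_lt_sum_of_ssubset_of_pos {ι : Type*} {s t : Finset ι} {w : ι → ℕ}
    (hst : s ⊂ t) (hw : ∀ i ∈ t, 0 < w i) : ∑ i ∈ s, w i < ∑ i ∈ t, w i := by
  obtain ⟨i, hit, his⟩ := exists_of_ssubset hst
  exact sum_lt_sum_of_subset hst.subset hit his (hw i hit) fun _ _ _ => Nat.zero_le _

theorem Matrix.det_map_C_mul_diagonal_X_pow_add {n R : Type*} [Fintype n] [DecidableEq n]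
    [CommRing R] (A B : Matrix n n R) (w : n → ℕ) :
    (A.map C * diagonal (fun i => (X : R[X]) ^ w i) + B.map C).det
      = ∑ s : Finset n, C (piecewiseCols s A B).det * X ^ ∑ i ∈ s, w i := by
  rw [det_mul_diagonal_add]
  refine sum_congr rfl fun s _ => ?_
  rw [prod_pow_eq_pow_sum, mul_comm, RingHom.map_det, RingHom.mapMatrix_apply, piecewiseCols_map]

theorem det_mul_diagonal_pow_add_general
    {F : Type*} [Field F] (n : ℕ) (A B : Matrix (Fin n) (Fin n) F)
    (hA : IsUnit A) (w : Fin n → ℕ) (hw : ∀ i, 0 < w i) :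
    (Matrix.det (A.map Polynomial.C * Matrix.diagonal (fun i => (X : F[X]) ^ (w i))
        + B.map Polynomial.C)).coeff 0 = B.det
    ∧ (Matrix.det (A.map Polynomial.C * Matrix.diagonal (fun i => (X : F[X]) ^ (w i))
        + B.map Polynomial.C)).coeff (∑ i, w i) = A.det
    ∧ (Matrix.det (A.map Polynomial.C * Matrix.diagonal (fun i => (X : F[X]) ^ (w i))
        + B.map Polynomial.C)).degree = ((∑ i, w i : ℕ) : WithBot ℕ) := by
  rw [Matrix.det_map_C_mul_diagonal_X_pow_add]
  have h_sum_empty : (∑ i ∈ (∅ : Finset (Fin n)), w i) = 0 := sum_empty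
  have h_coeff_zero := coeff_sum_C_mul_X_pow_of_ne univ (fun s => (A.piecewiseCols s B).det)
    (fun s => ∑ i ∈ s, w i) (mem_univ ∅) fun s _ hs =>
      (sum_lt_sum_of_ssubset_of_pos (empty_ssubset.mpr (nonempty_iff_ne_empty.mpr hs)) fun i _ => hw i).ne'
  have h_coeff_top := coeff_sum_C_mul_X_pow_of_ne univ (fun s => (A.piecewiseCols s B).det)
    (fun s => ∑ i ∈ s, w i) (mem_univ univ) fun s _ hs =>
      (sum_lt_sum_of_ssubset_of_pos (ssubset_univ_iff.mpr hs) fun i _ => hw i).ne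
  simp only [h_sum_empty, Matrix.piecewiseCols_empty, Matrix.piecewiseCols_univ] at h_coeff_zero h_coeff_top
  refine ⟨h_coeff_zero, h_coeff_top, degree_eq_of_le_of_coeff_ne_zero ?_ ?_⟩
  · exact degree_sum_C_mul_X_pow_le _ _ _ fun s _ => sum_le_sum_of_subset (subset_univ s)
  · exact h_coeff_top ▸ ((Matrix.isUnit_iff_isUnit_det A).mp hA).ne_zero

theorem det_mul_diagonal_pow_add
    {F : Type*} [Field F] (n : ℕ) (A B : Matrix (Fin n) (Fin n) F)
    (hA : IsUnit A) (hB : IsUnit B) (w : Fin n → ℕ) (hw : ∀ i, 0 < w i) :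
    (Matrix.det (A.map Polynomial.C * Matrix.diagonal (fun i => (X : F[X]) ^ (w i))
        + B.map Polynomial.C)).coeff 0 = B.det
    ∧ (Matrix.det (A.map Polynomial.C * Matrix.diagonal (fun i => (X : F[X]) ^ (w i))
        + B.map Polynomial.C)).coeff (∑ i, w i) = A.det
    ∧ (Matrix.det (A.map Polynomial.C * Matrix.diagonal (fun i => (X : F[X]) ^ (w i))
        + B.map Polynomial.C)).degree = ((∑ i, w i : ℕ) : WithBot ℕ) :=
  det_mul_diagonal_pow_add_general n A B hA w hw
end

section
/- Let F be a field and let J be an invertible b × b matrix over F. Consider the F[t,t⁻¹]-linear endomorphism of F[t,t⁻¹]^b given by the matrix t·I_b − J (where I_b is the identity matrix and J is regarded as a matrix over F[t,t⁻¹]). Then the cokernel of this map is a finite-dimensional F-vector space of dimension exactly b. -/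
/-!
The cokernel of `t - J` is `F^b` with `t` acting as `J`. In the quotient, `t • c ≡ J c` for
every constant vector `c`, and since `J` is invertible also `t⁻¹ • c ≡ J⁻¹ c`; hence
`p • c ≡ p(J) c` for every Laurent polynomial `p`, so every vector is congruent to a constant
one. Conversely, `v ↦ ∑ⱼ vⱼ(J) eⱼ` is the identity on constant vectors and kills the image of
`t - J`, so no nonzero constant vector lies in that image.
-/

open LaurentPolynomial Matrix

namespace LaurentPolynomial

variable {R A : Type*} [CommSemiring R] [Semiring A] [Algebra R A]

noncomputable def aevalUnit (u : Aˣ) : R[T;T⁻¹] →ₐ[R] A :=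
  AddMonoidAlgebra.lift R A ℤ ((Units.coeHom A).comp (zpowersHom Aˣ u))

@[simp]
lemma aevalUnit_T (u : Aˣ) (k : ℤ) : aevalUnit u (T k : R[T;T⁻¹]) = ↑(u ^ k) := by
  rw [aevalUnit, T, AddMonoidAlgebra.lift_single]
  simp [zpowersHom_apply]

end LaurentPolynomial

namespace Matrix

variable {R : Type*} [CommRing R] {n : Type*}

variable (R n) in
noncomputable def laurentConst : (n → R) →ₗ[R] (n → R[T;T⁻¹]) :=
  (Algebra.linearMap R R[T;T⁻¹]).compLeft n

@[simp]
lemma laurentConst_apply (c : n → R) (i : n) :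
    laurentConst R n c i = algebraMap R R[T;T⁻¹] (c i) :=
  rfl

variable [Fintype n]

lemma map_mulVec_laurentConst (J : Matrix n n R) (c : n → R) :
    J.map (algebraMap R R[T;T⁻¹]) *ᵥ laurentConst R n c = laurentConst R n (J *ᵥ c) := by
  funext i
  exact ((algebraMap R R[T;T⁻¹]).map_mulVec J c i).symm

variable [DecidableEq n]

noncomputable def laurentCharmatrix (J : Matrix n n R) : Matrix n n R[T;T⁻¹] :=
  (T 1 : R[T;T⁻¹]) • (1 : Matrix n n R[T;T⁻¹]) - J.map (algebraMap R R[T;T⁻¹])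

noncomputable abbrev laurentCharRange (J : Matrix n n R) :
    Submodule R[T;T⁻¹] (n → R[T;T⁻¹]) :=
  LinearMap.range (laurentCharmatrix J).mulVecLin

lemma laurentCharmatrix_mulVec (J : Matrix n n R) (v : n → R[T;T⁻¹]) :
    laurentCharmatrix J *ᵥ v =
      (T 1 : R[T;T⁻¹]) • v - J.map (algebraMap R R[T;T⁻¹]) *ᵥ v := by
  simp [laurentCharmatrix, sub_mulVec, smul_mulVec]

lemma laurentCharmatrix_mulVec_single (J : Matrix n n R) (j : n) :
    laurentCharmatrix J *ᵥ Pi.single j 1 =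
      (T 1 : R[T;T⁻¹]) • laurentConst R n (Pi.single j 1) -
        laurentConst R n (J *ᵥ Pi.single j 1) := by
  rw [laurentCharmatrix_mulVec, ← map_mulVec_laurentConst]
  congr <;> funext i <;> simp [Pi.single_apply]

lemma T_one_smul_mkQ_laurentConst (J : Matrix n n R) (c : n → R) :
    (T 1 : R[T;T⁻¹]) • (laurentCharRange J).mkQ (laurentConst R n c) =
      (laurentCharRange J).mkQ (laurentConst R n (J *ᵥ c)) := by
  rw [← map_smul, ← sub_eq_zero, ← map_sub, Submodule.mkQ_apply,
    Submodule.Quotient.mk_eq_zero]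
  exact ⟨laurentConst R n c, by
    rw [mulVecLin_apply, laurentCharmatrix_mulVec, map_mulVec_laurentConst]⟩

section Unit

variable (u : (Matrix n n R)ˣ)

lemma T_smul_mkQ_laurentConst (k : ℤ) (c : n → R) :
    (T k : R[T;T⁻¹]) • (laurentCharRange (u : Matrix n n R)).mkQ (laurentConst R n c) =
      (laurentCharRange (u : Matrix n n R)).mkQ (laurentConst R n (↑(u ^ k) *ᵥ c)) := by
  induction k using Int.induction_on generalizing c with
  | zero => simp [T_zero]
  | succ k ih =>
    rw [add_comm, T_add, mul_smul, ih, T_one_smul_mkQ_laurentConst, mulVec_mulVec,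
      ← Units.val_mul, ← _root_.zpow_one_add]
  | pred k ih =>
    rw [← (isUnit_T (R := R) 1).smul_left_cancel, smul_smul, ← T_add, add_sub_cancel, ih,
      T_one_smul_mkQ_laurentConst, mulVec_mulVec, ← Units.val_mul, ← _root_.zpow_one_add,
      add_sub_cancel]

lemma mkQ_smul_laurentConst (p : R[T;T⁻¹]) (c : n → R) :
    (laurentCharRange (u : Matrix n n R)).mkQ (p • laurentConst R n c) =
      (laurentCharRange (u : Matrix n n R)).mkQ (laurentConst R n (aevalUnit u p *ᵥ c)) := by
  induction p using LaurentPolynomial.induction_on' with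
  | add p q hp hq => simp only [add_smul, map_add, hp, hq, add_mulVec]
  | C_mul_T k a =>
    rw [← smul_eq_C_mul, smul_assoc, LinearMap.map_smul_of_tower, map_smul,
      T_smul_mkQ_laurentConst, map_smul, aevalUnit_T, smul_mulVec, map_smul,
      LinearMap.map_smul_of_tower]

noncomputable def laurentEval : (n → R[T;T⁻¹]) →ₗ[R] (n → R) where
  toFun v := ∑ j, aevalUnit u (v j) *ᵥ Pi.single j 1
  map_add' v w := by simp only [Pi.add_apply, map_add, add_mulVec, Finset.sum_add_distrib]
  map_smul' a v := by
    simp only [Pi.smul_apply, map_smul, smul_mulVec, Finset.smul_sum, RingHom.id_apply]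

lemma laurentEval_apply (v : n → R[T;T⁻¹]) :
    laurentEval u v = ∑ j, aevalUnit u (v j) *ᵥ Pi.single j 1 :=
  rfl

lemma laurentEval_smul (p : R[T;T⁻¹]) (v : n → R[T;T⁻¹]) :
    laurentEval u (p • v) = aevalUnit u p *ᵥ laurentEval u v := by
  simp only [laurentEval_apply, Pi.smul_apply, smul_eq_mul, map_mul, ← mulVec_mulVec, mulVec_sum]

lemma laurentEval_laurentConst (c : n → R) : laurentEval u (laurentConst R n c) = c := by
  simp only [laurentEval_apply, laurentConst_apply, Algebra.algebraMap_eq_smul_one, map_smul,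
    map_one, smul_mulVec, one_mulVec]
  exact (pi_eq_sum_univ' c).symm

lemma laurentEval_laurentCharmatrix_mulVec (v : n → R[T;T⁻¹]) :
    laurentEval u (laurentCharmatrix (u : Matrix n n R) *ᵥ v) = 0 := by
  rw [pi_eq_sum_univ' v, mulVec_sum, map_sum]
  refine Finset.sum_eq_zero fun j _ => ?_
  rw [mulVec_smul, laurentEval_smul, laurentCharmatrix_mulVec_single, map_sub, laurentEval_smul,
    laurentEval_laurentConst, laurentEval_laurentConst, aevalUnit_T, zpow_one, sub_self,
    mulVec_zero]

lemma mkQ_eq_mkQ_laurentConst_laurentEval (v : n → R[T;T⁻¹]) :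
    (laurentCharRange (u : Matrix n n R)).mkQ v =
      (laurentCharRange (u : Matrix n n R)).mkQ (laurentConst R n (laurentEval u v)) := by
  have single_eq (j : n) :
      (Pi.single j 1 : n → R[T;T⁻¹]) = laurentConst R n (Pi.single j 1) := by
    funext i
    simp [Pi.single_apply]
  conv_lhs => rw [pi_eq_sum_univ' v]
  simp only [single_eq, map_sum, mkQ_smul_laurentConst, laurentEval_apply]

noncomputable def laurentCokerEquiv :
    (n → R) ≃ₗ[R] (n → R[T;T⁻¹]) ⧸ laurentCharRange (u : Matrix n n R) :=
  LinearEquiv.ofBijective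
    ((laurentCharRange (u : Matrix n n R)).mkQ.restrictScalars R ∘ₗ laurentConst R n)
    ⟨by
      refine (injective_iff_map_eq_zero _).mpr fun c hc => ?_
      obtain ⟨w, hw⟩ := (Submodule.Quotient.mk_eq_zero _).mp hc
      rw [← laurentEval_laurentConst u c, ← hw, mulVecLin_apply,
        laurentEval_laurentCharmatrix_mulVec],
    fun x => by
      obtain ⟨v, rfl⟩ := Submodule.mkQ_surjective _ x
      exact ⟨laurentEval u v, (mkQ_eq_mkQ_laurentConst_laurentEval u v).symm⟩⟩

end Unit

end Matrix

theorem finrank_coker_t_sub_J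
    {F : Type*} [Field F] (b : ℕ) (J : Matrix (Fin b) (Fin b) F) (hJ : IsUnit J) :
    FiniteDimensional F
      ((Fin b → LaurentPolynomial F) ⧸
        LinearMap.range (Matrix.mulVecLin
          ((T 1 : LaurentPolynomial F) • (1 : Matrix (Fin b) (Fin b) (LaurentPolynomial F))
            - J.map (algebraMap F (LaurentPolynomial F)))))
    ∧ Module.finrank F
      ((Fin b → LaurentPolynomial F) ⧸
        LinearMap.range (Matrix.mulVecLin
          ((T 1 : LaurentPolynomial F) • (1 : Matrix (Fin b) (Fin b) (LaurentPolynomial F))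
            - J.map (algebraMap F (LaurentPolynomial F))))) = b := by
  obtain ⟨u, rfl⟩ := hJ
  have e := laurentCokerEquiv u
  exact ⟨Module.Finite.equiv e, e.finrank_eq.symm.trans (Module.finrank_fin_fun F)⟩
end
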